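/- Define P̃_C = Σ_{i=r+1}^{r+s} (1−σ̂_i²)⁻¹ Ẑ_i Ẑ_iᵀ − Σ_{i=r+1}^{r+s} σ̂_i(1−σ̂_i²)⁻¹ Ẑ_i W̆_iᵀ + Σ_{i=r+s+1}^{p} Ẑ_i Ẑ_iᵀ and P̃_N = Σ_{i=r+1}^{r+s} (1−σ̂_i²)⁻¹ W̆_i W̆_iᵀ − Σ_{i=r+1}^{r+s} σ̂_i(1−σ̂_i²)⁻¹ W̆_i Ẑ_iᵀ + Σ_{i=r+s+1}^{K} W̆_i W̆_iᵀ. Then max{‖P̂_C − P̃_C‖, ‖P̂_N − P̃_N‖} ≤ 16τ/(1 − σ_{r+1})². -/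

import Mathlib

open Matrix

noncomputable def specNorm {m n : Type*} [Fintype m] [Fintype n] [DecidableEq n]
    (A : Matrix m n ℝ) : ℝ :=
  ‖LinearMap.toContinuousLinearMap (Matrix.toEuclideanLin A)‖

noncomputable def vnorm {n : Type*} [Fintype n] (v : n → ℝ) : ℝ :=
  Real.sqrt (∑ i, v i ^ 2)

open scoped Matrix.Norms.L2Operator

/-!
With `Ẑ = Z Û` and `W̆ = Ŵ V̂` one has `ẐᵀẐ = 1`, `W̆ᵀW̆ = 1` and `ẐᵀW̆ = Σ̂`, so the Gram matrix of
`M̂` is `[[1, D], [Dᵀ, 1]]` with `D` rectangular diagonal, and its inverse is explicit. This gives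
`P̂_C = ∑_{i ≥ r} (1 - σ̂ᵢ²)⁻¹ ẑᵢẑᵢᵀ - σ̂ᵢ (1 - σ̂ᵢ²)⁻¹ ẑᵢw̆ᵢᵀ`, which differs from `P̃_C` only in
the indices `i ≥ r + s`, where `P̃_C` has the coefficients `1` and `0` instead.
Weyl's inequality, applied to `ZᵀŴ = ZᵀW (WᵀŴ) + Zᵀ(ŴŴᵀ - WWᵀ)Ŵ`, gives `σ̂ᵢ ≤ σᵢ + τ`; hence
`σ̂_r < 1` and `σ̂ᵢ ≤ τ` for `i ≥ r + s`, so each coefficient is off by at most `2τ` and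
`‖P̂_C - P̃_C‖ ≤ 4τ`. The projection `P̂_N` is `P̂_C` with the roles of `Ẑ` and `W̆` exchanged.
Indices start at `0` throughout, so `σ r` is the paper's `σ_{r+1}`.
-/

section RectDiag

variable {α : Type*} {a b m : ℕ}

def rectDiag [Zero α] (a b : ℕ) (c : ℕ → α) : Matrix (Fin a) (Fin b) α :=
  of fun i j => if (i : ℕ) = j then c i else 0

lemma rectDiag_apply [Zero α] (c : ℕ → α) (i : Fin a) (j : Fin b) :
    rectDiag a b c i j = if (i : ℕ) = j then c i else 0 := rfl

lemma rectDiag_congr [Zero α] {c d : ℕ → α} (h : ∀ i, i < a → i < b → c i = d i) :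
    rectDiag a b c = rectDiag a b d := by
  ext i j
  simp only [rectDiag_apply]
  split_ifs with hij
  · exact h i i.2 (hij ▸ j.2)
  · rfl

lemma transpose_rectDiag [Zero α] (c : ℕ → α) : (rectDiag a b c)ᵀ = rectDiag b a c := by
  ext i j
  simp only [transpose_apply, rectDiag_apply, eq_comm (a := (j : ℕ))]
  split_ifs with h <;> simp [h]

lemma rectDiag_sub [AddGroup α] (c d : ℕ → α) :
    rectDiag a b c - rectDiag a b d = rectDiag a b (c - d) := by
  ext i j
  simp only [Matrix.sub_apply, rectDiag_apply]
  split_ifs <;> simp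

lemma rectDiag_add [AddMonoid α] (c d : ℕ → α) :
    rectDiag a b c + rectDiag a b d = rectDiag a b (c + d) := by
  ext i j
  simp only [Matrix.add_apply, rectDiag_apply]
  split_ifs <;> simp

lemma rectDiag_eq_diagonal [Zero α] (c : ℕ → α) :
    rectDiag a a c = diagonal fun i : Fin a => c i := by
  ext i j
  simp [rectDiag_apply, diagonal_apply, Fin.val_inj]

lemma rectDiag_one [Zero α] [One α] : rectDiag a a (1 : ℕ → α) = 1 := by
  rw [rectDiag_eq_diagonal]
  exact diagonal_one

lemma rectDiag_mul_rectDiag [NonUnitalNonAssocSemiring α] (c d : ℕ → α) :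
    rectDiag a b c * rectDiag b m d = rectDiag a m fun i => if i < b then c i * d i else 0 := by
  ext i j
  rw [mul_apply, rectDiag_apply]
  by_cases hb : (i : ℕ) < b
  · rw [Finset.sum_eq_single ⟨i, hb⟩]
    · simp [rectDiag_apply, hb]
    · intro k _ hk
      simp [rectDiag_apply, Ne.symm (Fin.val_ne_of_ne hk)]
    · simp
  · refine (Finset.sum_eq_zero fun k _ => ?_).trans (by simp [hb])
    have : (i : ℕ) ≠ k := by omega
    simp [rectDiag_apply, this]

lemma rectDiag_eq_mul_add [Semiring α] (k : ℕ) (c : ℕ → α) :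
    rectDiag a b c
      = rectDiag a k c * rectDiag k b (1 : ℕ → α)
        + rectDiag a b fun i => if k ≤ i then c i else 0 := by
  rw [rectDiag_mul_rectDiag, rectDiag_add]
  refine rectDiag_congr fun i _ _ => ?_
  by_cases hi : i < k
  · simp [hi, Nat.not_le.mpr hi]
  · simp [hi, Nat.le_of_not_lt hi]

end RectDiag

section Columns

variable {α : Type*} {l l' : Type*} {a b : ℕ}

def extCol [Zero α] (A : Matrix l (Fin a) α) (i : ℕ) (x : l) : α :=
  if h : i < a then A x ⟨i, h⟩ else 0

def tailCols (A : Matrix l (Fin a) α) (r : ℕ) : Matrix l (Fin (a - r)) α :=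
  of fun x j => A x ⟨r + j, by omega⟩

lemma extCol_tailCols [Zero α] (A : Matrix l (Fin a) α) (r i : ℕ) :
    extCol (tailCols A r) i = extCol A (r + i) := by
  ext x
  by_cases h : i < a - r
  · simp [extCol, tailCols, h, show r + i < a by omega]
  · simp [extCol, h, show ¬ r + i < a by omega]

lemma mul_rectDiag_mul_transpose_apply [CommSemiring α] (A : Matrix l (Fin a) α)
    (B : Matrix l' (Fin b) α) (c : ℕ → α) (x : l) (y : l') :
    (A * rectDiag a b c * Bᵀ) x y = ∑ i ∈ Finset.range b, extCol A i x * c i * extCol B i y := by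
  have hAc : ∀ j : Fin b, (A * rectDiag a b c) x j = extCol A j x * c j := by
    intro j
    rw [mul_apply, extCol]
    split_ifs with hj
    · rw [Finset.sum_eq_single ⟨j, hj⟩]
      · simp [rectDiag_apply]
      · intro k _ hk
        simp [rectDiag_apply, Fin.val_ne_of_ne hk]
      · simp
    · refine (Finset.sum_eq_zero fun k _ => ?_).trans (zero_mul _).symm
      have : (k : ℕ) ≠ j := by omega
      simp [rectDiag_apply, this]
  rw [mul_apply, ← Fin.sum_univ_eq_sum_range (fun i => extCol A i x * c i * extCol B i y)]
  refine Finset.sum_congr rfl fun j _ => ?_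
  simp [hAc, extCol]

lemma tailCols_mul_rectDiag_mul_transpose [CommSemiring α] (A : Matrix l (Fin a) α)
    (B : Matrix l' (Fin b) α) (c : ℕ → α) (r : ℕ) :
    tailCols A r * rectDiag (a - r) (b - r) c * (tailCols B r)ᵀ
      = A * rectDiag a b (fun i => if r ≤ i then c (i - r) else 0) * Bᵀ := by
  ext x y
  simp only [mul_rectDiag_mul_transpose_apply, extCol_tailCols, mul_ite, ite_mul, mul_zero,
    zero_mul]
  rw [← Finset.sum_filter, show (Finset.range b).filter (r ≤ ·) = Finset.Ico r b by
    ext; simp; omega, Finset.sum_Ico_eq_sum_range]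
  simp

lemma transpose_tailCols_mul_tailCols [CommSemiring α] [Fintype l] {A : Matrix l (Fin a) α}
    {B : Matrix l (Fin b) α} {c : ℕ → α} (h : Aᵀ * B = rectDiag a b c) (r : ℕ) :
    (tailCols A r)ᵀ * tailCols B r = rectDiag (a - r) (b - r) fun j => c (r + j) := by
  ext i j
  have hij := congr_fun₂ h ⟨r + i, by omega⟩ ⟨r + j, by omega⟩
  simp only [mul_apply, transpose_apply, rectDiag_apply] at hij ⊢
  simp only [tailCols, of_apply, hij, Nat.add_left_cancel_iff]

lemma sum_attach_smul_vecMulVec [CommSemiring α] (S : Finset ℕ) (hSa : ∀ i ∈ S, i < a)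
    (hSb : ∀ i ∈ S, i < b) (c : ℕ → α) (A : Matrix l (Fin a) α) (B : Matrix l' (Fin b) α) :
    ∑ i ∈ S.attach, c i • vecMulVec (fun x => A x ⟨i, hSa i i.2⟩) (fun y => B y ⟨i, hSb i i.2⟩)
      = A * rectDiag a b (fun i => if i ∈ S then c i else 0) * Bᵀ := by
  ext x y
  rw [mul_rectDiag_mul_transpose_apply, Matrix.sum_apply]
  simp only [mul_ite, ite_mul, mul_zero, zero_mul, Finset.sum_ite_mem,
    Finset.inter_eq_right.mpr fun i hi => Finset.mem_range.mpr (hSb i hi)]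
  rw [← Finset.sum_attach S]
  refine Finset.sum_congr rfl fun i _ => ?_
  simp [vecMulVec_apply, extCol, hSa i i.2, hSb i i.2]
  ring

lemma sum_attach_vecMulVec [CommSemiring α] (S : Finset ℕ) (hSa : ∀ i ∈ S, i < a)
    (hSb : ∀ i ∈ S, i < b) (A : Matrix l (Fin a) α) (B : Matrix l' (Fin b) α) :
    ∑ i ∈ S.attach, vecMulVec (fun x => A x ⟨i, hSa i i.2⟩) (fun y => B y ⟨i, hSb i i.2⟩)
      = A * rectDiag a b (fun i => if i ∈ S then (1 : α) else 0) * Bᵀ := by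
  simpa using sum_attach_smul_vecMulVec S hSa hSb 1 A B

end Columns

section ObliqueProjection

lemma fromCols_eq_submatrix_fromCols {α l m₁ m₂ : Type*} (A : Matrix l m₁ α)
    (B : Matrix l m₂ α) : fromCols A B = (fromCols B A).submatrix id (Equiv.sumComm m₁ m₂) := by
  ext x (j | j) <;> rfl

variable {α : Type*} [CommRing α] {l m₁ m₂ : Type*} [Fintype l] [Fintype m₁] [Fintype m₂]
  [DecidableEq m₁] [DecidableEq m₂]

lemma inv_fromBlocks_one_transpose_one {D : Matrix m₁ m₂ α} {E : Matrix m₁ m₁ α}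
    {G : Matrix m₂ m₂ α} (hE : (1 - D * Dᵀ) * E = 1) (hG : (1 - Dᵀ * D) * G = 1) :
    (fromBlocks 1 D Dᵀ 1)⁻¹ = fromBlocks E (-(D * G)) (-(Dᵀ * E)) G := by
  refine inv_eq_right_inv ?_
  rw [fromBlocks_multiply, ← fromBlocks_one]
  simp only [sub_mul, one_mul, Matrix.mul_neg, Matrix.mul_assoc] at hE hG ⊢
  congr 1
  · rw [← hE]; abel
  · simp
  · simp
  · rw [← hG]; abel

/-- The projection onto the column space of `A` along that of `B`. -/
noncomputable def obliqueProj (A : Matrix l m₁ α) (B : Matrix l m₂ α) : Matrix l l α :=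
  fromCols A (0 : Matrix l m₂ α) * ((fromCols A B)ᵀ * fromCols A B)⁻¹ * (fromCols A B)ᵀ

lemma obliqueProj_eq {A : Matrix l m₁ α} {B : Matrix l m₂ α} {D : Matrix m₁ m₂ α}
    {E : Matrix m₁ m₁ α} {G : Matrix m₂ m₂ α} (hA : Aᵀ * A = 1) (hB : Bᵀ * B = 1)
    (hAB : Aᵀ * B = D) (hE : (1 - D * Dᵀ) * E = 1) (hG : (1 - Dᵀ * D) * G = 1) :
    obliqueProj A B = A * E * Aᵀ - A * (D * G) * Bᵀ := by
  have hBA : Bᵀ * A = Dᵀ := by rw [← hAB, transpose_mul, transpose_transpose]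
  rw [obliqueProj, transpose_fromCols, fromRows_mul_fromCols, hA, hB, hAB, hBA,
    inv_fromBlocks_one_transpose_one hE hG, fromCols_mul_fromBlocks, fromCols_mul_fromRows]
  simp [Matrix.mul_assoc, sub_eq_add_neg]

lemma fromCols_zero_mul_inv_gram (A : Matrix l m₁ α) (B : Matrix l m₂ α) :
    fromCols (0 : Matrix l m₁ α) B * ((fromCols A B)ᵀ * fromCols A B)⁻¹ * (fromCols A B)ᵀ
      = obliqueProj B A := by
  rw [obliqueProj, fromCols_eq_submatrix_fromCols A B,
    fromCols_eq_submatrix_fromCols (0 : Matrix l m₁ α) B, transpose_submatrix,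
    ← submatrix_mul _ _ _ id _ Function.bijective_id, inv_submatrix_equiv, submatrix_mul_equiv,
    submatrix_mul_equiv]
  rfl

end ObliqueProjection

section ObliqueProjectionDiagonal

variable {α : Type*} [Field α] {l : Type*} [Fintype l] {a b : ℕ}

lemma one_sub_rectDiag_mul_transpose_mul_rectDiag {d : ℕ → α}
    (hd : ∀ i, i < a → i < b → 1 - d i ^ 2 ≠ 0) :
    (1 - rectDiag a b d * (rectDiag a b d)ᵀ)
      * rectDiag a a (fun i => if i < b then (1 - d i ^ 2)⁻¹ else 1) = 1 := by
  rw [transpose_rectDiag, rectDiag_mul_rectDiag, ← rectDiag_one, rectDiag_sub,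
    rectDiag_mul_rectDiag]
  refine rectDiag_congr fun i hi _ => ?_
  by_cases hib : i < b
  · simp [hi, hib, ← sq, hd i hi hib]
  · simp [hi, hib]

lemma obliqueProj_of_transpose_mul_eq_rectDiag {A : Matrix l (Fin a) α} {B : Matrix l (Fin b) α}
    {d : ℕ → α} (hA : Aᵀ * A = 1) (hB : Bᵀ * B = 1) (hAB : Aᵀ * B = rectDiag a b d)
    (hd : ∀ i, i < a → i < b → 1 - d i ^ 2 ≠ 0) :
    obliqueProj A B
      = A * rectDiag a a (fun i => if i < b then (1 - d i ^ 2)⁻¹ else 1) * Aᵀ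
        - A * rectDiag a b (fun i => d i / (1 - d i ^ 2)) * Bᵀ := by
  have hG : (1 - (rectDiag a b d)ᵀ * rectDiag a b d)
      * rectDiag b b (fun i => if i < a then (1 - d i ^ 2)⁻¹ else 1) = 1 := by
    simpa only [transpose_rectDiag] using
      one_sub_rectDiag_mul_transpose_mul_rectDiag (a := b) (b := a) fun i hb ha => hd i ha hb
  rw [obliqueProj_eq hA hB hAB (one_sub_rectDiag_mul_transpose_mul_rectDiag hd) hG]
  congr 3
  rw [rectDiag_mul_rectDiag]
  refine rectDiag_congr fun i hi hib => ?_
  simp [hib, hi, div_eq_mul_inv]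

end ObliqueProjectionDiagonal

lemma mulVec_dotProduct_mulVec {α m n : Type*} [CommSemiring α] [Fintype m] [Fintype n]
    (A : Matrix m n α) (x y : n → α) : (A *ᵥ x) ⬝ᵥ (A *ᵥ y) = x ⬝ᵥ ((Aᵀ * A) *ᵥ y) := by
  rw [← mulVec_mulVec, dotProduct_mulVec x Aᵀ, vecMul_transpose]

section Norms

variable {l m n : Type*} [Fintype l] [Fintype m] [Fintype n]

lemma specNorm_eq_l2_opNorm [DecidableEq n] (A : Matrix m n ℝ) : specNorm A = ‖A‖ := rfl

lemma l2_opNorm_transpose [DecidableEq m] [DecidableEq n] (A : Matrix m n ℝ) : ‖Aᵀ‖ = ‖A‖ := by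
  simpa using A.l2_opNorm_conjTranspose

lemma norm_le_one_of_transpose_mul_self [DecidableEq n] {A : Matrix m n ℝ} (hA : Aᵀ * A = 1) :
    ‖A‖ ≤ 1 := by
  have h := A.l2_opNorm_conjTranspose_mul_self
  rw [conjTranspose_eq_transpose_of_trivial, hA] at h
  have h1 : ‖(1 : Matrix n n ℝ)‖ ≤ 1 := by
    rw [← diagonal_one, l2_opNorm_diagonal]
    exact (pi_norm_le_iff_of_nonneg zero_le_one).mpr fun _ => by simp
  nlinarith [norm_nonneg A]

lemma norm_mul_mul_le_of_le_one {m' : Type*} [Fintype m'] [DecidableEq m] [DecidableEq n]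
    [DecidableEq m'] {A : Matrix l m ℝ} {C : Matrix n m' ℝ} (hA : ‖A‖ ≤ 1) (hC : ‖C‖ ≤ 1)
    (B : Matrix m n ℝ) : ‖A * B * C‖ ≤ ‖B‖ :=
  calc ‖A * B * C‖ ≤ ‖A‖ * ‖B‖ * ‖C‖ :=
        (l2_opNorm_mul _ _).trans (mul_le_mul_of_nonneg_right (l2_opNorm_mul _ _) (norm_nonneg _))
    _ ≤ 1 * ‖B‖ * 1 := by gcongr
    _ = ‖B‖ := by ring

lemma norm_rectDiag_le {a b : ℕ} {c : ℕ → ℝ} {C : ℝ} (hC : 0 ≤ C)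
    (hc : ∀ i, i < a → i < b → |c i| ≤ C) : ‖rectDiag a b c‖ ≤ C := by
  have h := (rectDiag a b c).l2_opNorm_conjTranspose_mul_self
  rw [conjTranspose_eq_transpose_of_trivial, transpose_rectDiag, rectDiag_mul_rectDiag,
    rectDiag_eq_diagonal, l2_opNorm_diagonal] at h
  have hle : ‖fun i : Fin b => if (i : ℕ) < a then c i * c i else 0‖ ≤ C * C := by
    refine (pi_norm_le_iff_of_nonneg (mul_nonneg hC hC)).mpr fun i => ?_
    split_ifs with hi
    · rw [norm_mul, Real.norm_eq_abs]
      exact mul_le_mul (hc i hi i.2) (hc i hi i.2) (abs_nonneg _) hC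
    · simpa using mul_nonneg hC hC
  rw [h] at hle
  exact (mul_self_le_mul_self_iff (norm_nonneg _) hC).mpr hle

lemma dotProduct_self_eq_norm_sq (v : m → ℝ) :
    v ⬝ᵥ v = ‖(EuclideanSpace.equiv m ℝ).symm v‖ ^ 2 := by
  rw [EuclideanSpace.real_norm_sq_eq]
  simp [dotProduct, sq]

lemma dotProduct_mulVec_self_le [DecidableEq n] (G : Matrix m n ℝ) (y : n → ℝ) :
    (G *ᵥ y) ⬝ᵥ (G *ᵥ y) ≤ ‖G‖ ^ 2 * (y ⬝ᵥ y) := by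
  rw [dotProduct_self_eq_norm_sq, dotProduct_self_eq_norm_sq, ← mul_pow]
  exact pow_le_pow_left₀ (norm_nonneg _) (G.l2_opNorm_mulVec _) 2

end Norms

section SingularValues

lemma transpose_mul_mul_eq_of_svd {α : Type*} [CommRing α] {l m n : Type*} [Fintype l]
    [Fintype m] [Fintype n] [DecidableEq m] [DecidableEq n] {A : Matrix l m α}
    {B : Matrix l n α} {U : Matrix m m α} {V : Matrix n n α} {D : Matrix m n α}
    (h : Aᵀ * B = U * D * Vᵀ) (hU : Uᵀ * U = 1) (hV : Vᵀ * V = 1) : (A * U)ᵀ * (B * V) = D := by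
  rw [transpose_mul, Matrix.mul_assoc, ← Matrix.mul_assoc Aᵀ, h]
  simp only [Matrix.mul_assoc, hV, Matrix.mul_one]
  rw [← Matrix.mul_assoc, hU, Matrix.one_mul]

-- Counting dimensions, some `F c ≠ 0` lies in the span of the first `k + 1` right singular
-- vectors and in `ker Q`; `U Σ Vᵀ` stretches it by at least `σ k` and agrees with `G` on it.
lemma singularValue_le_norm_of_eq_mul_add {p K k : ℕ} {σ : ℕ → ℝ} (hσ : Antitone σ)
    (hσk : 0 ≤ σ k) (hkp : k < p) (hkK : k < K) {U : Matrix (Fin p) (Fin p) ℝ}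
    {V : Matrix (Fin K) (Fin K) ℝ} (hU : Uᵀ * U = 1) (hV : Vᵀ * V = 1)
    (P : Matrix (Fin p) (Fin k) ℝ) (Q : Matrix (Fin k) (Fin K) ℝ) (G : Matrix (Fin p) (Fin K) ℝ)
    (h : U * rectDiag p K σ * Vᵀ = P * Q + G) : σ k ≤ ‖G‖ := by
  set F : Matrix (Fin K) (Fin (k + 1)) ℝ := V * rectDiag K (k + 1) (1 : ℕ → ℝ)
  set R : Matrix (Fin p) (Fin (k + 1)) ℝ := rectDiag p (k + 1) σ
  have hF : Fᵀ * F = 1 := by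
    rw [transpose_mul, Matrix.mul_assoc, ← Matrix.mul_assoc Vᵀ, hV, Matrix.one_mul,
      transpose_rectDiag, rectDiag_mul_rectDiag, ← rectDiag_one]
    exact rectDiag_congr fun i _ hi => by simp [show i < K by omega]
  have hMF : U * rectDiag p K σ * Vᵀ * F = U * R := by
    rw [Matrix.mul_assoc, Matrix.mul_assoc, ← Matrix.mul_assoc Vᵀ, hV, Matrix.one_mul,
      rectDiag_mul_rectDiag]
    congr 1
    exact rectDiag_congr fun i _ hi => by simp [show i < K by omega]
  obtain ⟨c, hc, hc0⟩ := Submodule.exists_mem_ne_zero_of_ne_bot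
    (LinearMap.ker_ne_bot_of_finrank_lt (f := (Q * F).mulVecLin) (by simp))
  rw [LinearMap.mem_ker, mulVecLin_apply] at hc
  have hGFc : G *ᵥ (F *ᵥ c) = U *ᵥ (R *ᵥ c) := by
    rw [mulVec_mulVec, mulVec_mulVec, ← hMF, h, Matrix.add_mul, add_mulVec,
      Matrix.mul_assoc, ← mulVec_mulVec c P, hc, mulVec_zero, zero_add]
  have hlow : σ k ^ 2 * (c ⬝ᵥ c) ≤ (G *ᵥ (F *ᵥ c)) ⬝ᵥ (G *ᵥ (F *ᵥ c)) := by
    rw [hGFc, mulVec_dotProduct_mulVec, hU, one_mulVec, mulVec_dotProduct_mulVec,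
      transpose_rectDiag, rectDiag_mul_rectDiag, rectDiag_eq_diagonal, dotProduct,
      dotProduct, Finset.mul_sum]
    refine Finset.sum_le_sum fun i _ => ?_
    have hi : σ k ≤ σ i := hσ (Nat.lt_succ_iff.mp i.2)
    simp only [mulVec_diagonal, show (i : ℕ) < p by omega, if_true]
    nlinarith [mul_self_nonneg (c i), mul_le_mul hi hi hσk (hσk.trans hi)]
  have hup := dotProduct_mulVec_self_le G (F *ᵥ c)
  rw [mulVec_dotProduct_mulVec F c c, hF, one_mulVec] at hup
  have hpos : 0 < c ⬝ᵥ c := lt_of_le_of_ne (Finset.sum_nonneg fun i _ => mul_self_nonneg (c i))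
    (Ne.symm (dotProduct_self_eq_zero.not.mpr hc0))
  exact (pow_le_pow_iff_left₀ hσk (norm_nonneg G) two_ne_zero).mp
    (le_of_mul_le_mul_right (hlow.trans hup) hpos)

lemma singularValue_le_add_of_svd {n p K k : ℕ} {Z : Matrix (Fin n) (Fin p) ℝ}
    {W Wh : Matrix (Fin n) (Fin K) ℝ} {U Uh : Matrix (Fin p) (Fin p) ℝ}
    {V Vh : Matrix (Fin K) (Fin K) ℝ} {σ σh : ℕ → ℝ} (hW : Wᵀ * W = 1) (hWh : Whᵀ * Wh = 1)
    (hU : Uᵀ * U = 1) (hV : Vᵀ * V = 1) (hUh : Uhᵀ * Uh = 1) (hVh : Vhᵀ * Vh = 1)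
    (hSVD : Zᵀ * W = U * rectDiag p K σ * Vᵀ) (hSVDh : Zᵀ * Wh = Uh * rectDiag p K σh * Vhᵀ)
    (hσ : Antitone σ) (hσ0 : ∀ i, 0 ≤ σ i) (hσh : Antitone σh) (hσhk : 0 ≤ σh k) (hkp : k < p)
    (hkK : k < K) : σh k ≤ σ k + ‖(Wh * Whᵀ - W * Wᵀ) * Z‖ := by
  set X := Vᵀ * (Wᵀ * Wh)
  set T := (Wh * Whᵀ - W * Wᵀ) * Z
  have hdecomp : Zᵀ * Wh = U * rectDiag p K σ * X + Tᵀ * Wh := by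
    have h1 : Zᵀ * Wh = Zᵀ * (Wh * (Whᵀ * Wh)) := by rw [hWh, Matrix.mul_one]
    have h2 : U * rectDiag p K σ * X = Zᵀ * W * (Wᵀ * Wh) := by
      rw [hSVD]; simp only [X, Matrix.mul_assoc]
    rw [h2, transpose_mul, transpose_sub, transpose_mul, transpose_mul, transpose_transpose,
      transpose_transpose]
    nth_rw 1 [h1]
    simp only [Matrix.mul_sub, Matrix.sub_mul, Matrix.mul_assoc]
    abel
  have hX : ‖X‖ ≤ 1 := by
    have h := norm_mul_mul_le_of_le_one (A := Vᵀ) (C := Wh)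
      (by rw [l2_opNorm_transpose]; exact norm_le_one_of_transpose_mul_self hV)
      (norm_le_one_of_transpose_mul_self hWh) Wᵀ
    rw [Matrix.mul_assoc, l2_opNorm_transpose] at h
    exact h.trans (norm_le_one_of_transpose_mul_self hW)
  have htail : ‖rectDiag p K fun i => if k ≤ i then σ i else 0‖ ≤ σ k :=
    norm_rectDiag_le (hσ0 k) fun i _ _ => by
      split_ifs with h
      · rw [abs_of_nonneg (hσ0 i)]; exact hσ h
      · simpa using hσ0 k
  refine (singularValue_le_norm_of_eq_mul_add hσh hσhk hkp hkK hUh hVh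
    (U * rectDiag p k σ) (rectDiag k K (1 : ℕ → ℝ) * X)
    (U * rectDiag p K (fun i => if k ≤ i then σ i else 0) * X + Tᵀ * Wh) ?_).trans ?_
  · rw [← hSVDh, hdecomp, rectDiag_eq_mul_add k σ]
    simp only [Matrix.mul_add, Matrix.add_mul, Matrix.mul_assoc]
    abel
  · refine (norm_add_le _ _).trans (add_le_add ?_ ?_)
    · exact (norm_mul_mul_le_of_le_one (norm_le_one_of_transpose_mul_self hU) hX _).trans htail
    · calc ‖Tᵀ * Wh‖ ≤ ‖Tᵀ‖ * ‖Wh‖ := l2_opNorm_mul _ _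
        _ ≤ ‖T‖ * 1 := by
          rw [l2_opNorm_transpose]
          gcongr
          exact norm_le_one_of_transpose_mul_self hWh
        _ = ‖T‖ := mul_one _

end SingularValues

section ErrorBound

lemma abs_inv_one_sub_sq_sub_one_le {u t : ℝ} (hu : 0 ≤ u) (hut : u ≤ t) (ht : t ≤ 1 / 2) :
    |(1 - u ^ 2)⁻¹ - 1| ≤ 2 * t := by
  have hpos : 3 / 4 ≤ 1 - u ^ 2 := by nlinarith
  have h : (1 - u ^ 2)⁻¹ - 1 = u ^ 2 / (1 - u ^ 2) := by
    field_simp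
    ring
  rw [h, abs_of_nonneg (div_nonneg (sq_nonneg u) (by linarith)), div_le_iff₀ (by linarith)]
  nlinarith

lemma abs_div_one_sub_sq_le {u t : ℝ} (hu : 0 ≤ u) (hut : u ≤ t) (ht : t ≤ 1 / 2) :
    |u / (1 - u ^ 2)| ≤ 2 * t := by
  have hpos : 3 / 4 ≤ 1 - u ^ 2 := by nlinarith
  rw [abs_of_nonneg (div_nonneg hu (by linarith)), div_le_iff₀ (by linarith)]
  nlinarith

variable {n a b : ℕ} {X : Matrix (Fin n) (Fin a) ℝ} {Y : Matrix (Fin n) (Fin b) ℝ}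

lemma norm_sub_le_of_rectDiag (hX : Xᵀ * X = 1) (hY : Yᵀ * Y = 1) {α β : ℕ → ℝ} {C : ℝ}
    (hC : 0 ≤ C) (hα : ∀ i, i < a → |α i| ≤ C) (hβ : ∀ i, i < a → i < b → |β i| ≤ C) :
    ‖X * rectDiag a a α * Xᵀ - X * rectDiag a b β * Yᵀ‖ ≤ 2 * C := by
  have hXn := norm_le_one_of_transpose_mul_self hX
  have hXt : ‖Xᵀ‖ ≤ 1 := by rwa [l2_opNorm_transpose]
  have hYt : ‖Yᵀ‖ ≤ 1 := by rw [l2_opNorm_transpose]; exact norm_le_one_of_transpose_mul_self hY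
  calc _ ≤ ‖X * rectDiag a a α * Xᵀ‖ + ‖X * rectDiag a b β * Yᵀ‖ := norm_sub_le _ _
    _ ≤ C + C := add_le_add
        ((norm_mul_mul_le_of_le_one hXn hXt _).trans (norm_rectDiag_le hC fun i hi _ => hα i hi))
        ((norm_mul_mul_le_of_le_one hXn hYt _).trans (norm_rectDiag_le hC hβ))
    _ = 2 * C := by ring

lemma obliqueProj_tailCols {r : ℕ} {σ : ℕ → ℝ} (hX : Xᵀ * X = 1) (hY : Yᵀ * Y = 1)
    (hXY : Xᵀ * Y = rectDiag a b σ) (hσ : Antitone σ) (hσ0 : ∀ i, 0 ≤ σ i) (hσr : σ r < 1) :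
    obliqueProj (tailCols X r) (tailCols Y r)
      = X * rectDiag a a (fun i => if r ≤ i then if i < b then (1 - σ i ^ 2)⁻¹ else 1 else 0) * Xᵀ
        - X * rectDiag a b (fun i => if r ≤ i then σ i / (1 - σ i ^ 2) else 0) * Yᵀ := by
  have hgram : ∀ {c : ℕ} {A : Matrix (Fin n) (Fin c) ℝ}, Aᵀ * A = 1 →
      (tailCols A r)ᵀ * tailCols A r = 1 := fun h => by
    rw [transpose_tailCols_mul_tailCols (h.trans rectDiag_one.symm)]
    exact rectDiag_one
  rw [obliqueProj_of_transpose_mul_eq_rectDiag (hgram hX) (hgram hY)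
      (transpose_tailCols_mul_tailCols hXY r) fun i _ _ => by
        nlinarith [(hσ (Nat.le_add_right r i)).trans_lt hσr, hσ0 (r + i)],
    tailCols_mul_rectDiag_mul_transpose, tailCols_mul_rectDiag_mul_transpose]
  congr 3 <;> refine rectDiag_congr fun i _ _ => ?_
  · by_cases hri : r ≤ i
    · simp [hri, Nat.add_sub_cancel' hri, show i - r < b - r ↔ i < b by omega]
    · simp [hri]
  · by_cases hri : r ≤ i
    · simp [hri, Nat.add_sub_cancel' hri]
    · simp [hri]

lemma norm_obliqueProj_tailCols_sub_le {r s : ℕ} {σ : ℕ → ℝ} {t : ℝ} (hX : Xᵀ * X = 1)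
    (hY : Yᵀ * Y = 1) (hXY : Xᵀ * Y = rectDiag a b σ) (hrb : r + s ≤ b) (hσ : Antitone σ)
    (hσ0 : ∀ i, 0 ≤ σ i) (hσr : σ r < 1) (hσt : ∀ i, r + s ≤ i → i < a → i < b → σ i ≤ t)
    (ht0 : 0 ≤ t) (ht : t ≤ 1 / 2) :
    ‖obliqueProj (tailCols X r) (tailCols Y r)
      - (X * rectDiag a a (fun i => if i ∈ Finset.Ico r (r + s) then (1 - σ i ^ 2)⁻¹ else 0) * Xᵀ
        - X * rectDiag a b (fun i => if i ∈ Finset.Ico r (r + s) then σ i / (1 - σ i ^ 2) else 0)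
          * Yᵀ
        + X * rectDiag a a (fun i => if i ∈ Finset.Ico (r + s) a then (1 : ℝ) else 0) * Xᵀ)‖
      ≤ 4 * t := by
  have hrw : ∀ (A C E : Matrix (Fin a) (Fin a) ℝ) (B D : Matrix (Fin a) (Fin b) ℝ),
      X * A * Xᵀ - X * B * Yᵀ - (X * C * Xᵀ - X * D * Yᵀ + X * E * Xᵀ)
        = X * (A - C - E) * Xᵀ - X * (B - D) * Yᵀ := by
    intros
    simp only [Matrix.mul_sub, Matrix.sub_mul]
    abel
  rw [obliqueProj_tailCols hX hY hXY hσ hσ0 hσr, hrw, rectDiag_sub, rectDiag_sub, rectDiag_sub]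
  refine (norm_sub_le_of_rectDiag hX hY (by positivity : 0 ≤ 2 * t) ?_ ?_).trans (by linarith)
  · intro i hia
    simp only [Pi.sub_apply, Finset.mem_Ico]
    rcases lt_or_ge i (r + s) with his | hsi
    · by_cases hri : r ≤ i
      · simp [hri, his, show i < b by omega, show ¬ r + s ≤ i by omega, ht0]
      · simp [hri, show ¬ r + s ≤ i by omega, ht0]
    by_cases hib : i < b
    · simpa [hsi, hia, hib, show r ≤ i by omega, Nat.not_lt.mpr hsi] using
        abs_inv_one_sub_sq_sub_one_le (hσ0 i) (hσt i hsi hia hib) ht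
    · simp [hsi, hia, hib, show r ≤ i by omega, Nat.not_lt.mpr hsi, ht0]
  · intro i hia hib
    simp only [Pi.sub_apply, Finset.mem_Ico]
    rcases lt_or_ge i (r + s) with his | hsi
    · by_cases hri : r ≤ i <;> simp [hri, his, ht0]
    · simpa [show r ≤ i by omega, Nat.not_lt.mpr hsi] using
        abs_div_one_sub_sq_le (hσ0 i) (hσt i hsi hia hib) ht

end ErrorBound

theorem stmt_7
    (n p K r s : ℕ) (hs : 1 ≤ s) (hrp : r + s ≤ p) (hrK : r + s ≤ K)
    (Z : Matrix (Fin n) (Fin p) ℝ) (W : Matrix (Fin n) (Fin K) ℝ)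
    (hZ : Zᵀ * Z = 1) (hW : Wᵀ * W = 1)
    (U : Matrix (Fin p) (Fin p) ℝ) (V : Matrix (Fin K) (Fin K) ℝ)
    (hU : Uᵀ * U = 1) (hV : Vᵀ * V = 1)
    (σ : ℕ → ℝ)
    (hσlt : σ r < 1)
    (hσanti : ∀ i j, i ≤ j → σ j ≤ σ i)
    (hσzero : ∀ i, r + s ≤ i → σ i = 0)
    (hSVD : Zᵀ * W
      = U * (Matrix.of fun (i : Fin p) (j : Fin K) =>
          if (i : ℕ) = (j : ℕ) then σ (i : ℕ) else 0) * Vᵀ)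
    (What : Matrix (Fin n) (Fin K) ℝ) (hWhat : Whatᵀ * What = 1)
    (Uh : Matrix (Fin p) (Fin p) ℝ) (Vh : Matrix (Fin K) (Fin K) ℝ)
    (hUh : Uhᵀ * Uh = 1) (hVh : Vhᵀ * Vh = 1)
    (σh : ℕ → ℝ)
    (hσhanti : ∀ i j, i ≤ j → σh j ≤ σh i)
    (hσhnonneg : ∀ i, 0 ≤ σh i)
    (hSVDh : Zᵀ * What
      = Uh * (Matrix.of fun (i : Fin p) (j : Fin K) =>
          if (i : ℕ) = (j : ℕ) then σh (i : ℕ) else 0) * Vhᵀ)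
    (Zh : Matrix (Fin n) (Fin p) ℝ) (hZh : Zh = Z * Uh)
    (Wbr : Matrix (Fin n) (Fin K) ℝ) (hWbr : Wbr = What * Vh)
    (τ : ℝ) (hτ : τ = specNorm ((What * Whatᵀ - W * Wᵀ) * Z))
    (hgap : 40 * τ ≤ min ((1 - σ r) ^ 2) (σ (r + s - 1) ^ 2))
    (Mh : Matrix (Fin n) (Fin (p - r) ⊕ Fin (K - r)) ℝ)
    (hMhl : ∀ (a : Fin n) (j : Fin (p - r)),
      Mh a (Sum.inl j) = Zh a ⟨r + j.1, by have := j.2; omega⟩)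
    (hMhr : ∀ (a : Fin n) (j : Fin (K - r)),
      Mh a (Sum.inr j) = Wbr a ⟨r + j.1, by have := j.2; omega⟩)
    (PCh PNh : Matrix (Fin n) (Fin n) ℝ)
    (hPCh : PCh = (Matrix.of fun (a : Fin n) (j : Fin (p - r) ⊕ Fin (K - r)) =>
        Sum.elim (fun j' : Fin (p - r) => Zh a ⟨r + j'.1, by have := j'.2; omega⟩)
                 (fun _ : Fin (K - r) => (0 : ℝ)) j) * (Mhᵀ * Mh)⁻¹ * Mhᵀ)
    (hPNh : PNh = (Matrix.of fun (a : Fin n) (j : Fin (p - r) ⊕ Fin (K - r)) =>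
        Sum.elim (fun _ : Fin (p - r) => (0 : ℝ))
                 (fun j' : Fin (K - r) => Wbr a ⟨r + j'.1, by have := j'.2; omega⟩) j)
        * (Mhᵀ * Mh)⁻¹ * Mhᵀ)
    (PCt PNt : Matrix (Fin n) (Fin n) ℝ)
    (hPCt : PCt = (∑ i ∈ (Finset.Ico r (r + s)).attach,
            (1 - σh i.1 ^ 2)⁻¹ • Matrix.vecMulVec
              (fun a : Fin n => Zh a ⟨i.1, by have := (Finset.mem_Ico.mp i.2).2; omega⟩)
              (fun a : Fin n => Zh a ⟨i.1, by have := (Finset.mem_Ico.mp i.2).2; omega⟩))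
       - (∑ i ∈ (Finset.Ico r (r + s)).attach,
            (σh i.1 / (1 - σh i.1 ^ 2)) • Matrix.vecMulVec
              (fun a : Fin n => Zh a ⟨i.1, by have := (Finset.mem_Ico.mp i.2).2; omega⟩)
              (fun a : Fin n => Wbr a ⟨i.1, by have := (Finset.mem_Ico.mp i.2).2; omega⟩))
       + (∑ i ∈ (Finset.Ico (r + s) p).attach,
            Matrix.vecMulVec
              (fun a : Fin n => Zh a ⟨i.1, (Finset.mem_Ico.mp i.2).2⟩)
              (fun a : Fin n => Zh a ⟨i.1, (Finset.mem_Ico.mp i.2).2⟩)))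
    (hPNt : PNt = (∑ i ∈ (Finset.Ico r (r + s)).attach,
            (1 - σh i.1 ^ 2)⁻¹ • Matrix.vecMulVec
              (fun a : Fin n => Wbr a ⟨i.1, by have := (Finset.mem_Ico.mp i.2).2; omega⟩)
              (fun a : Fin n => Wbr a ⟨i.1, by have := (Finset.mem_Ico.mp i.2).2; omega⟩))
       - (∑ i ∈ (Finset.Ico r (r + s)).attach,
            (σh i.1 / (1 - σh i.1 ^ 2)) • Matrix.vecMulVec
              (fun a : Fin n => Wbr a ⟨i.1, by have := (Finset.mem_Ico.mp i.2).2; omega⟩)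
              (fun a : Fin n => Zh a ⟨i.1, by have := (Finset.mem_Ico.mp i.2).2; omega⟩))
       + (∑ i ∈ (Finset.Ico (r + s) K).attach,
            Matrix.vecMulVec
              (fun a : Fin n => Wbr a ⟨i.1, (Finset.mem_Ico.mp i.2).2⟩)
              (fun a : Fin n => Wbr a ⟨i.1, (Finset.mem_Ico.mp i.2).2⟩))) :
    specNorm (PCh - PCt) ≤ 16 * τ / (1 - σ r) ^ 2
    ∧ specNorm (PNh - PNt) ≤ 16 * τ / (1 - σ r) ^ 2 := by
  have hσ0 : ∀ i, 0 ≤ σ i := fun i => by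
    simpa [hσzero (max i (r + s)) (le_max_right _ _)] using hσanti i _ (le_max_left i (r + s))
  have hτ0 : 0 ≤ τ := hτ ▸ norm_nonneg _
  have hgap' : 40 * τ ≤ (1 - σ r) ^ 2 := hgap.trans (min_le_left _ _)
  have hsq : (1 - σ r) ^ 2 ≤ 1 - σ r := by nlinarith [hσ0 r]
  have hZZ : Zhᵀ * Zh = 1 := hZh ▸ transpose_mul_mul_eq_of_svd
    (by rw [hZ, Matrix.mul_one, mul_eq_one_comm.mp hUh]) hUh hUh
  have hWW : Wbrᵀ * Wbr = 1 := hWbr ▸ transpose_mul_mul_eq_of_svd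
    (by rw [hWhat, Matrix.mul_one, mul_eq_one_comm.mp hVh]) hVh hVh
  have hZW : Zhᵀ * Wbr = rectDiag p K σh := hZh ▸ hWbr ▸ transpose_mul_mul_eq_of_svd hSVDh hUh hVh
  have hWZ : Wbrᵀ * Zh = rectDiag K p σh := by
    rw [← transpose_transpose Zh, ← transpose_mul, hZW, transpose_rectDiag]
  have hweyl : ∀ k, k < p → k < K → σh k ≤ σ k + τ := fun k hkp hkK => hτ ▸
    singularValue_le_add_of_svd hW hWhat hU hV hUh hVh hSVD hSVDh hσanti hσ0 hσhanti
      (hσhnonneg k) hkp hkK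
  have hσhr : σh r < 1 := by linarith [hweyl r (by omega) (by omega)]
  have hσht : ∀ i, r + s ≤ i → i < p → i < K → σh i ≤ τ := fun i hi hip hiK => by
    simpa [hσzero _ le_rfl] using (hσhanti _ _ hi).trans (hweyl (r + s) (by omega) (by omega))
  have hMh : Mh = fromCols (tailCols Zh r) (tailCols Wbr r) := by
    ext x (j | j) <;> simp [hMhl, hMhr, tailCols]
  have hPC : PCh = obliqueProj (tailCols Zh r) (tailCols Wbr r) := by
    rw [hPCh, hMh]
    rfl
  have hPN : PNh = obliqueProj (tailCols Wbr r) (tailCols Zh r) := by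
    rw [hPNh, hMh, ← fromCols_zero_mul_inv_gram]
    rfl
  have hIco : ∀ {c}, r + s ≤ c → ∀ i ∈ Finset.Ico r (r + s), i < c := fun h i hi => by
    simp at hi; omega
  have hIco' : ∀ {c}, ∀ i ∈ Finset.Ico (r + s) c, i < c := fun i hi => (Finset.mem_Ico.mp hi).2
  rw [sum_attach_smul_vecMulVec _ (hIco hrp) (hIco hrp) (fun i => (1 - σh i ^ 2)⁻¹),
    sum_attach_smul_vecMulVec _ (hIco hrp) (hIco hrK) (fun i => σh i / (1 - σh i ^ 2)),
    sum_attach_vecMulVec _ hIco' hIco'] at hPCt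
  rw [sum_attach_smul_vecMulVec _ (hIco hrK) (hIco hrK) (fun i => (1 - σh i ^ 2)⁻¹),
    sum_attach_smul_vecMulVec _ (hIco hrK) (hIco hrp) (fun i => σh i / (1 - σh i ^ 2)),
    sum_attach_vecMulVec _ hIco' hIco'] at hPNt
  have h4 : 4 * τ ≤ 16 * τ / (1 - σ r) ^ 2 := by
    rw [le_div_iff₀ (by nlinarith)]
    nlinarith [hσ0 r]
  refine ⟨?_, ?_⟩
  · rw [specNorm_eq_l2_opNorm, hPC, hPCt]
    exact (norm_obliqueProj_tailCols_sub_le hZZ hWW hZW hrK hσhanti hσhnonneg hσhr hσht hτ0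
      (by linarith [hσ0 r])).trans h4
  · rw [specNorm_eq_l2_opNorm, hPN, hPNt]
    exact (norm_obliqueProj_tailCols_sub_le hWW hZZ hWZ hrp hσhanti hσhnonneg hσhr
      (fun i hi hiK hip => hσht i hi hip hiK) hτ0 (by linarith [hσ0 r])).trans h4
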